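/- The image of the evaluation/substitution map sending a supersymmetric polynomial f ∈ k[x_1,...,x_m,y_1,...,y_n] to the polynomial obtained by setting x_m = T, y_n = -T is contained in the supersymmetric polynomials in k[x_1,...,x_{m-1},y_1,...,y_{n-1}]: i.e., if f is supersymmetric in m + n variables, then f|_{x_m = T, y_n = -T} is independent of T and is a supersymmetric polynomial in the remaining m - 1 + n - 1 variables. -/

import Mathlib

open MvPolynomial

/-- The substitution `x₁ = T, y₁ = -T` (other variables untouched), landing in
polynomials in `T` over the polynomial ring. -/
noncomputable def subst (k : Type*) [Field k] (m n : ℕ) :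
    MvPolynomial (Fin (m + 1) ⊕ Fin (n + 1)) k →ₐ[k]
      Polynomial (MvPolynomial (Fin (m + 1) ⊕ Fin (n + 1)) k) :=
  aeval (fun v => if v = Sum.inl 0 then Polynomial.X
    else if v = Sum.inr 0 then -Polynomial.X
    else Polynomial.C (X v))

/-- Symmetric in the `x`-variables. -/
def SymX (k : Type*) [Field k] (m n : ℕ)
    (f : MvPolynomial (Fin (m + 1) ⊕ Fin (n + 1)) k) : Prop :=
  ∀ σ : Equiv.Perm (Fin (m + 1)), rename (Sum.map σ id) f = f

/-- Symmetric in the `y`-variables. -/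
def SymY (k : Type*) [Field k] (m n : ℕ)
    (f : MvPolynomial (Fin (m + 1) ⊕ Fin (n + 1)) k) : Prop :=
  ∀ τ : Equiv.Perm (Fin (n + 1)), rename (Sum.map id τ) f = f

/-- Supersymmetric polynomial. -/
def SuperSym (k : Type*) [Field k] (m n : ℕ)
    (f : MvPolynomial (Fin (m + 1) ⊕ Fin (n + 1)) k) : Prop :=
  SymX k m n f ∧ SymY k m n f ∧ ∃ c, subst k m n f = Polynomial.C c

/-- The substitution `x_m = T, y_n = -T` (the last variables), landing in
polynomials in `T` over the polynomial ring in the remaining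
`(m-1) + (n-1)` variables. -/
noncomputable def substLast (k : Type*) [Field k] (m n : ℕ) :
    MvPolynomial (Fin (m + 2) ⊕ Fin (n + 2)) k →ₐ[k]
      Polynomial (MvPolynomial (Fin (m + 1) ⊕ Fin (n + 1)) k) :=
  aeval (fun v => match v with
    | Sum.inl i => if h : (i : ℕ) < m + 1 then
        Polynomial.C (X (Sum.inl ⟨i, h⟩)) else Polynomial.X
    | Sum.inr j => if h : (j : ℕ) < n + 1 then
        Polynomial.C (X (Sum.inr ⟨j, h⟩)) else -Polynomial.X)

/-! Symmetry in the `x`'s and in the `y`'s lets us exchange the first variables with the last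
ones, so setting `x_last = T, y_last = -T` gives, up to renaming, the constant obtained from
`x₀ = T, y₀ = -T`. Permutations of the remaining variables extend to permutations fixing the
last ones, which keeps the result symmetric. For the supersymmetry condition, substitute both
`x₀ = S, y₀ = -S` and `x_last = T, y_last = -T`: done in the two possible orders, the results
differ by exchanging `S` and `T`, and one of them is free of `S`. -/

namespace SuperSym

variable {k : Type*} [Field k] {m n : ℕ}

@[simp] lemma substLast_X_inl_castSucc (i : Fin (m + 1)) :
    substLast k m n (X (.inl i.castSucc)) = Polynomial.C (X (.inl i)) := by
  simp [substLast, Fin.is_le]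

@[simp] lemma substLast_X_inl_zero :
    substLast k m n (X (.inl 0)) = Polynomial.C (X (.inl 0)) :=
  substLast_X_inl_castSucc 0

@[simp] lemma substLast_X_inl_last :
    substLast k m n (X (.inl (Fin.last (m + 1)))) = Polynomial.X := by
  simp [substLast]

@[simp] lemma substLast_X_inr_castSucc (j : Fin (n + 1)) :
    substLast k m n (X (.inr j.castSucc)) = Polynomial.C (X (.inr j)) := by
  simp [substLast, Fin.is_le]

@[simp] lemma substLast_X_inr_zero :
    substLast k m n (X (.inr 0)) = Polynomial.C (X (.inr 0)) :=
  substLast_X_inr_castSucc 0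

@[simp] lemma substLast_X_inr_last :
    substLast k m n (X (.inr (Fin.last (n + 1)))) = -Polynomial.X := by
  simp [substLast]

@[simp] lemma subst_X_inl_zero : subst k m n (X (.inl 0)) = Polynomial.X := by
  simp [subst]

@[simp] lemma subst_X_inr_zero : subst k m n (X (.inr 0)) = -Polynomial.X := by
  simp [subst]

lemma subst_X_inl_of_ne_zero {i : Fin (m + 1)} (hi : i ≠ 0) :
    subst k m n (X (.inl i)) = Polynomial.C (X (.inl i)) := by
  simp [subst, hi]

lemma subst_X_inr_of_ne_zero {j : Fin (n + 1)} (hj : j ≠ 0) :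
    subst k m n (X (.inr j)) = Polynomial.C (X (.inr j)) := by
  simp [subst, hj]

@[simp] lemma subst_X_inl_last :
    subst k (m + 1) n (X (.inl (Fin.last (m + 1)))) = Polynomial.C (X (.inl (Fin.last (m + 1)))) :=
  subst_X_inl_of_ne_zero Fin.last_pos.ne'

@[simp] lemma subst_X_inr_last :
    subst k m (n + 1) (X (.inr (Fin.last (n + 1)))) = Polynomial.C (X (.inr (Fin.last (n + 1)))) :=
  subst_X_inr_of_ne_zero Fin.last_pos.ne'

def lastToZero (m : ℕ) : Fin (m + 2) → Fin (m + 1) := Fin.lastCases 0 id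

@[simp] lemma lastToZero_castSucc (i : Fin (m + 1)) : lastToZero m i.castSucc = i := by
  simp [lastToZero]

@[simp] lemma lastToZero_last : lastToZero m (Fin.last (m + 1)) = 0 := by
  simp [lastToZero]

lemma substLast_comp_rename_swap :
    (substLast k m n).comp
        (rename (Sum.map (Equiv.swap 0 (Fin.last (m + 1))) (Equiv.swap 0 (Fin.last (n + 1)))))
      = (Polynomial.mapAlgHom (rename (Sum.map (lastToZero m) (lastToZero n)))).comp
          (subst k (m + 1) (n + 1)) := by
  apply algHom_ext
  rintro (i | j)
  · induction i using Fin.lastCases with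
    | last => simp
    | cast i =>
      rcases eq_or_ne i 0 with rfl | hi
      · simp
      · have hi' := Fin.castSucc_ne_zero_iff.mpr hi
        simp [Equiv.swap_apply_of_ne_of_ne hi' (Fin.castSucc_lt_last i).ne,
          subst_X_inl_of_ne_zero hi']
  · induction j using Fin.lastCases with
    | last => simp
    | cast j =>
      rcases eq_or_ne j 0 with rfl | hj
      · simp
      · have hj' := Fin.castSucc_ne_zero_iff.mpr hj
        simp [Equiv.swap_apply_of_ne_of_ne hj' (Fin.castSucc_lt_last j).ne,
          subst_X_inr_of_ne_zero hj']

def extendLast (ρ : Equiv.Perm (Fin (m + 1))) : Equiv.Perm (Fin (m + 2)) :=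
  finSuccEquivLast.symm.permCongr ρ.optionCongr

@[simp] lemma extendLast_castSucc (ρ : Equiv.Perm (Fin (m + 1))) (i : Fin (m + 1)) :
    extendLast ρ i.castSucc = (ρ i).castSucc := by
  simp [extendLast, Equiv.permCongr_apply]

@[simp] lemma extendLast_last (ρ : Equiv.Perm (Fin (m + 1))) :
    extendLast ρ (Fin.last (m + 1)) = Fin.last (m + 1) := by
  simp [extendLast, Equiv.permCongr_apply]

@[simp] lemma extendLast_one : extendLast (1 : Equiv.Perm (Fin (m + 1))) = 1 := by
  ext i
  simp [extendLast, Equiv.permCongr_apply]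

lemma substLast_comp_rename_extendLast (ρ : Equiv.Perm (Fin (m + 1)))
    (τ : Equiv.Perm (Fin (n + 1))) :
    (substLast k m n).comp (rename (Sum.map (extendLast ρ) (extendLast τ)))
      = (Polynomial.mapAlgHom (rename (Sum.map ρ τ))).comp (substLast k m n) := by
  apply algHom_ext
  rintro (i | j)
  · induction i using Fin.lastCases <;> simp
  · induction j using Fin.lastCases <;> simp

open Polynomial.Bivariate in
lemma swap_comp_mapAlgHom_substLast_comp_subst :
    ((swap (R := MvPolynomial (Fin (m + 1) ⊕ Fin (n + 1)) k)).toAlgHom.restrictScalars k).comp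
        ((Polynomial.mapAlgHom (substLast k m n)).comp (subst k (m + 1) (n + 1)))
      = (Polynomial.mapAlgHom (subst k m n)).comp (substLast k m n) := by
  apply algHom_ext
  rintro (i | j)
  · induction i using Fin.lastCases with
    | last => simp [swap_X]
    | cast i =>
      rcases eq_or_ne i 0 with rfl | hi
      · simp [swap_Y]
      · simp [subst_X_inl_of_ne_zero (Fin.castSucc_ne_zero_iff.mpr hi),
          subst_X_inl_of_ne_zero hi, swap_C_C]
  · induction j using Fin.lastCases with
    | last => simp [swap_X]
    | cast j =>
      rcases eq_or_ne j 0 with rfl | hj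
      · simp
        exact (map_neg (swap (R := MvPolynomial (Fin (m + 1) ⊕ Fin (n + 1)) k)) Y).trans
          (by rw [swap_Y])
      · simp [subst_X_inr_of_ne_zero (Fin.castSucc_ne_zero_iff.mpr hj),
          subst_X_inr_of_ne_zero hj, swap_C_C]

lemma rename_sumMap_eq_self {f : MvPolynomial (Fin (m + 1) ⊕ Fin (n + 1)) k}
    (hX : SymX k m n f) (hY : SymY k m n f) (σ : Equiv.Perm (Fin (m + 1)))
    (τ : Equiv.Perm (Fin (n + 1))) : rename (Sum.map σ τ) f = f :=
  calc rename (Sum.map σ τ) f = rename (Sum.map σ id) (rename (Sum.map id τ) f) := by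
        rw [rename_rename, Sum.map_comp_map]; rfl
    _ = f := by rw [hY, hX]

variable {f : MvPolynomial (Fin (m + 2) ⊕ Fin (n + 2)) k}

lemma substLast_eq_C_rename_lastToZero (hX : SymX k (m + 1) (n + 1) f)
    (hY : SymY k (m + 1) (n + 1) f) {c₀ : MvPolynomial (Fin (m + 2) ⊕ Fin (n + 2)) k}
    (hc₀ : subst k (m + 1) (n + 1) f = Polynomial.C c₀) :
    substLast k m n f = Polynomial.C (rename (Sum.map (lastToZero m) (lastToZero n)) c₀) := by
  rw [← rename_sumMap_eq_self hX hY (Equiv.swap 0 (Fin.last (m + 1)))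
    (Equiv.swap 0 (Fin.last (n + 1))), ← AlgHom.comp_apply, substLast_comp_rename_swap,
    AlgHom.comp_apply, hc₀]
  simp

lemma rename_eq_self_of_substLast_eq_C {c : MvPolynomial (Fin (m + 1) ⊕ Fin (n + 1)) k}
    (hc : substLast k m n f = Polynomial.C c) {ρ : Equiv.Perm (Fin (m + 1))}
    {τ : Equiv.Perm (Fin (n + 1))} (hf : rename (Sum.map (extendLast ρ) (extendLast τ)) f = f) :
    rename (Sum.map ρ τ) c = c := by
  have := congrArg (· f) (substLast_comp_rename_extendLast (k := k) ρ τ)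
  simp only [AlgHom.comp_apply, hf, hc, Polynomial.coe_mapAlgHom, Polynomial.map_C] at this
  exact Polynomial.C_injective this.symm

lemma symX_of_substLast_eq_C (hX : SymX k (m + 1) (n + 1) f)
    {c : MvPolynomial (Fin (m + 1) ⊕ Fin (n + 1)) k} (hc : substLast k m n f = Polynomial.C c) :
    SymX k m n c := fun σ => by
  simpa using rename_eq_self_of_substLast_eq_C hc (τ := 1) (by simpa using hX (extendLast σ))

lemma symY_of_substLast_eq_C (hY : SymY k (m + 1) (n + 1) f)
    {c : MvPolynomial (Fin (m + 1) ⊕ Fin (n + 1)) k} (hc : substLast k m n f = Polynomial.C c) :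
    SymY k m n c := fun τ => by
  simpa using rename_eq_self_of_substLast_eq_C hc (ρ := 1) (by simpa using hY (extendLast τ))

lemma subst_eq_C_of_substLast_eq_C {c₀ : MvPolynomial (Fin (m + 2) ⊕ Fin (n + 2)) k}
    (hc₀ : subst k (m + 1) (n + 1) f = Polynomial.C c₀)
    {c : MvPolynomial (Fin (m + 1) ⊕ Fin (n + 1)) k} (hc : substLast k m n f = Polynomial.C c) :
    subst k m n c = Polynomial.C ((substLast k m n c₀).coeff 0) := by
  have := congrArg (· f) swap_comp_mapAlgHom_substLast_comp_subst
  simp only [AlgHom.comp_apply, hc₀, hc, Polynomial.coe_mapAlgHom, Polynomial.map_C,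
    AlgHom.coe_restrictScalars', AlgEquiv.coe_toAlgHom, Polynomial.Bivariate.swap_C] at this
  simpa using congrArg (Polynomial.coeff · 0) this.symm

end SuperSym

theorem substLast_supersym_general (k : Type*) [Field k] (m n : ℕ)
    (f : MvPolynomial (Fin (m + 2) ⊕ Fin (n + 2)) k)
    (hf : SuperSym k (m + 1) (n + 1) f) :
    ∃ c : MvPolynomial (Fin (m + 1) ⊕ Fin (n + 1)) k,
      substLast k m n f = Polynomial.C c ∧ SuperSym k m n c := by
  obtain ⟨hX, hY, c₀, hc₀⟩ := hf
  have hc := SuperSym.substLast_eq_C_rename_lastToZero hX hY hc₀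
  exact ⟨_, hc, SuperSym.symX_of_substLast_eq_C hX hc, SuperSym.symY_of_substLast_eq_C hY hc, _,
    SuperSym.subst_eq_C_of_substLast_eq_C hc₀ hc⟩

/-- If `f` is supersymmetric in `m + n` variables (`m, n ≥ 2`), then the
substitution `x_m = T, y_n = -T` yields a polynomial independent of `T` which
is a supersymmetric polynomial in the remaining `(m-1) + (n-1)` variables. -/
theorem substLast_supersym (k : Type*) [Field k] [CharZero k] (m n : ℕ)
    (f : MvPolynomial (Fin (m + 2) ⊕ Fin (n + 2)) k)
    (hf : SuperSym k (m + 1) (n + 1) f) :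
    ∃ c : MvPolynomial (Fin (m + 1) ⊕ Fin (n + 1)) k,
      substLast k m n f = Polynomial.C c ∧ SuperSym k m n c :=
  substLast_supersym_general k m n f hf
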